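/- For matrices A ∈ ℝ^{n×h} and B ∈ ℝ^{m×h}, define the linear operator T : ℝ^{n×m} → ℝ^{(n+m)×h} by T(U) = [U·B ; Uᵀ·A] (stacking U·B on top of Uᵀ·A). Then the smallest singular value of T satisfies σ_min(T)² = σ_min(A)² + σ_min(B)², and the largest singular value satisfies σ_max(T)² = σ_max(A)² + σ_max(B)². -/

import Mathlib

open Matrix

/-- Frobenius norm of a real matrix. -/
noncomputable def fro {a b : ℕ} (A : Matrix (Fin a) (Fin b) ℝ) : ℝ :=
  Real.sqrt (∑ i, ∑ j, (A i j) ^ 2)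

/-- Frobenius (trace) inner product of two real matrices. -/
noncomputable def ip {a b : ℕ} (A B : Matrix (Fin a) (Fin b) ℝ) : ℝ :=
  ∑ i, ∑ j, A i j * B i j

/-- Square of the largest singular value of `A`: largest eigenvalue of `Aᴴ * A`. -/
noncomputable def smaxSq {a b : ℕ} (A : Matrix (Fin a) (Fin b) ℝ) : ℝ :=
  ⨆ i, (show (Aᵀ * A).IsHermitian by
    simpa using Matrix.isHermitian_conjTranspose_mul_self A).eigenvalues i

/-- Square of the smallest singular value of `A` (as the smallest eigenvalue of `Aᴴ * A`;
zero when `A` is rank-deficient as a map out of its column space). -/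
noncomputable def sminSq {a b : ℕ} (A : Matrix (Fin a) (Fin b) ℝ) : ℝ :=
  ⨅ i, (show (Aᵀ * A).IsHermitian by
    simpa using Matrix.isHermitian_conjTranspose_mul_self A).eigenvalues i

/-- Square of the largest singular value via `A * Aᴴ`. -/
noncomputable def smaxSqR {a b : ℕ} (A : Matrix (Fin a) (Fin b) ℝ) : ℝ :=
  ⨆ i, (Matrix.isHermitian_mul_conjTranspose_self A).eigenvalues i

/-- Square of the smallest singular value via `A * Aᴴ` (the `min(a,b)`-th singular value
when `a ≤ b`). -/
noncomputable def sminSqR {a b : ℕ} (A : Matrix (Fin a) (Fin b) ℝ) : ℝ :=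
  ⨅ i, (Matrix.isHermitian_mul_conjTranspose_self A).eigenvalues i

/-- Largest singular value. -/
noncomputable def smax {a b : ℕ} (A : Matrix (Fin a) (Fin b) ℝ) : ℝ :=
  Real.sqrt (smaxSq A)


/-!
Over the rows `rᵢ` and the columns `cⱼ` of `U`, `‖U B‖_F² = ∑ᵢ rᵢᵀ (B Bᵀ) rᵢ` and
`‖Uᵀ A‖_F² = ∑ⱼ cⱼᵀ (A Aᵀ) cⱼ`. The Rayleigh bounds `λ_min ‖x‖² ≤ xᵀ M x ≤ λ_max ‖x‖²`, read off
an orthonormal eigenbasis, bound each term by an extreme eigenvalue times `‖U‖_F² = 1`. Both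
bounds are attained at once by `U = u vᵀ`, with `u`, `v` unit eigenvectors of `A Aᵀ`, `B Bᵀ` for
the extreme eigenvalues, since then the rows and the columns of `U` are multiples of `v` and `u`.
-/

section Rayleigh

variable {ι : Type*} [Fintype ι]

lemma OrthonormalBasis.dotProduct_eq_sum (b : OrthonormalBasis ι ℝ (EuclideanSpace ℝ ι))
    (x y : ι → ℝ) : x ⬝ᵥ y = ∑ i, (⇑(b i) ⬝ᵥ x) * (⇑(b i) ⬝ᵥ y) := by
  have h := b.sum_inner_mul_inner (WithLp.toLp 2 x) (WithLp.toLp 2 y)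
  simp only [EuclideanSpace.inner_eq_star_dotProduct, star_trivial] at h
  rw [dotProduct_comm, ← h]
  exact Finset.sum_congr rfl fun i _ => by rw [dotProduct_comm y]

variable [DecidableEq ι] {M : Matrix ι ι ℝ}

lemma Matrix.IsHermitian.eigenvectorBasis_dotProduct_mulVec (hM : M.IsHermitian) (i : ι)
    (x : ι → ℝ) :
    ⇑(hM.eigenvectorBasis i) ⬝ᵥ (M *ᵥ x) =
      hM.eigenvalues i * (⇑(hM.eigenvectorBasis i) ⬝ᵥ x) := by
  rw [dotProduct_mulVec, ← mulVec_transpose, ← conjTranspose_eq_transpose_of_trivial, hM.eq,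
    hM.mulVec_eigenvectorBasis, smul_dotProduct, smul_eq_mul]

lemma Matrix.IsHermitian.dotProduct_mulVec_eq_sum (hM : M.IsHermitian) (x : ι → ℝ) :
    x ⬝ᵥ (M *ᵥ x) = ∑ i, hM.eigenvalues i * (⇑(hM.eigenvectorBasis i) ⬝ᵥ x) ^ 2 := by
  rw [hM.eigenvectorBasis.dotProduct_eq_sum]
  exact Finset.sum_congr rfl fun i _ => by
    rw [hM.eigenvectorBasis_dotProduct_mulVec]; ring

lemma Matrix.IsHermitian.iInf_eigenvalues_mul_le (hM : M.IsHermitian) (x : ι → ℝ) :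
    (⨅ i, hM.eigenvalues i) * (x ⬝ᵥ x) ≤ x ⬝ᵥ (M *ᵥ x) := by
  rw [hM.dotProduct_mulVec_eq_sum, hM.eigenvectorBasis.dotProduct_eq_sum, Finset.mul_sum]
  exact Finset.sum_le_sum fun i _ => by
    rw [← sq]
    exact mul_le_mul_of_nonneg_right (ciInf_le (Finite.bddBelow_range _) i) (sq_nonneg _)

lemma Matrix.IsHermitian.le_iSup_eigenvalues_mul (hM : M.IsHermitian) (x : ι → ℝ) :
    x ⬝ᵥ (M *ᵥ x) ≤ (⨆ i, hM.eigenvalues i) * (x ⬝ᵥ x) := by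
  rw [hM.dotProduct_mulVec_eq_sum, hM.eigenvectorBasis.dotProduct_eq_sum, Finset.mul_sum]
  exact Finset.sum_le_sum fun i _ => by
    rw [← sq]
    exact mul_le_mul_of_nonneg_right (le_ciSup (Finite.bddAbove_range _) i) (sq_nonneg _)

lemma Matrix.IsHermitian.eigenvectorBasis_dotProduct_self (hM : M.IsHermitian) (i : ι) :
    ⇑(hM.eigenvectorBasis i) ⬝ᵥ ⇑(hM.eigenvectorBasis i) = 1 := by
  simpa only [EuclideanSpace.inner_eq_star_dotProduct, star_trivial] using
    hM.eigenvectorBasis.inner_eq_one i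

lemma Matrix.IsHermitian.eigenvectorBasis_dotProduct_mulVec_self (hM : M.IsHermitian) (i : ι) :
    ⇑(hM.eigenvectorBasis i) ⬝ᵥ (M *ᵥ ⇑(hM.eigenvectorBasis i)) = hM.eigenvalues i := by
  rw [hM.eigenvectorBasis_dotProduct_mulVec, hM.eigenvectorBasis_dotProduct_self, mul_one]

end Rayleigh

section Frobenius

variable {a b c : ℕ}

lemma fro_sq (M : Matrix (Fin a) (Fin b) ℝ) : fro M ^ 2 = ∑ i, M i ⬝ᵥ M i := by
  rw [fro, Real.sq_sqrt (by positivity)]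
  simp only [dotProduct, sq]

lemma fro_transpose (M : Matrix (Fin a) (Fin b) ℝ) : fro Mᵀ = fro M := by
  rw [fro, fro, Finset.sum_comm]
  rfl

lemma fro_mul_sq (U : Matrix (Fin a) (Fin b) ℝ) (B : Matrix (Fin b) (Fin c) ℝ) :
    fro (U * B) ^ 2 = ∑ i, U i ⬝ᵥ ((B * Bᴴ) *ᵥ U i) := by
  rw [fro_sq]
  refine Finset.sum_congr rfl fun i _ => ?_
  rw [← mulVec_mulVec, conjTranspose_eq_transpose_of_trivial, mulVec_transpose, dotProduct_mulVec]
  rfl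

lemma fro_vecMulVec_sq (u : Fin a → ℝ) (v : Fin b → ℝ) :
    fro (vecMulVec u v) ^ 2 = (u ⬝ᵥ u) * (v ⬝ᵥ v) := by
  rw [fro_sq, dotProduct, Finset.sum_mul]
  refine Finset.sum_congr rfl fun i _ => ?_
  rw [show vecMulVec u v i = u i • v from row_vecMulVec u v i, dotProduct_smul, smul_dotProduct,
    smul_eq_mul, smul_eq_mul, mul_assoc]

lemma sminSqR_mul_fro_sq_le (U : Matrix (Fin a) (Fin b) ℝ) (B : Matrix (Fin b) (Fin c) ℝ) :
    sminSqR B * fro U ^ 2 ≤ fro (U * B) ^ 2 := by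
  rw [fro_mul_sq, fro_sq, Finset.mul_sum]
  exact Finset.sum_le_sum fun i _ =>
    (isHermitian_mul_conjTranspose_self B).iInf_eigenvalues_mul_le (U i)

lemma fro_mul_sq_le_smaxSqR_mul (U : Matrix (Fin a) (Fin b) ℝ) (B : Matrix (Fin b) (Fin c) ℝ) :
    fro (U * B) ^ 2 ≤ smaxSqR B * fro U ^ 2 := by
  rw [fro_mul_sq, fro_sq, Finset.mul_sum]
  exact Finset.sum_le_sum fun i _ =>
    (isHermitian_mul_conjTranspose_self B).le_iSup_eigenvalues_mul (U i)

lemma fro_vecMulVec_mul_sq (u : Fin a → ℝ) (v : Fin b → ℝ) (B : Matrix (Fin b) (Fin c) ℝ) :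
    fro (vecMulVec u v * B) ^ 2 = (u ⬝ᵥ u) * (v ⬝ᵥ ((B * Bᴴ) *ᵥ v)) := by
  rw [fro_mul_sq, dotProduct, Finset.sum_mul]
  refine Finset.sum_congr rfl fun i _ => ?_
  rw [show vecMulVec u v i = u i • v from row_vecMulVec u v i, mulVec_smul, dotProduct_smul,
    smul_dotProduct, smul_eq_mul, smul_eq_mul, mul_assoc]

end Frobenius

section StackedOperator

variable {n m h : ℕ} (A : Matrix (Fin n) (Fin h) ℝ) (B : Matrix (Fin m) (Fin h) ℝ)

lemma sminSqR_add_sminSqR_le {U : Matrix (Fin n) (Fin m) ℝ} (hU : fro U = 1) :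
    sminSqR A + sminSqR B ≤ fro (U * B) ^ 2 + fro (Uᵀ * A) ^ 2 := by
  have hB := sminSqR_mul_fro_sq_le U B
  have hA := sminSqR_mul_fro_sq_le Uᵀ A
  rw [fro_transpose, hU] at hA
  rw [hU] at hB
  linarith

lemma le_smaxSqR_add_smaxSqR {U : Matrix (Fin n) (Fin m) ℝ} (hU : fro U = 1) :
    fro (U * B) ^ 2 + fro (Uᵀ * A) ^ 2 ≤ smaxSqR A + smaxSqR B := by
  have hB := fro_mul_sq_le_smaxSqR_mul U B
  have hA := fro_mul_sq_le_smaxSqR_mul Uᵀ A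
  rw [fro_transpose, hU] at hA
  rw [hU] at hB
  linarith

lemma exists_fro_eq_one_eq_eigenvalues_add (iA : Fin n) (iB : Fin m) :
    ∃ U : Matrix (Fin n) (Fin m) ℝ, fro U = 1 ∧
      (isHermitian_mul_conjTranspose_self A).eigenvalues iA +
        (isHermitian_mul_conjTranspose_self B).eigenvalues iB =
      fro (U * B) ^ 2 + fro (Uᵀ * A) ^ 2 := by
  set hA := isHermitian_mul_conjTranspose_self A
  set hB := isHermitian_mul_conjTranspose_self B
  set u : Fin n → ℝ := ⇑(hA.eigenvectorBasis iA)
  set v : Fin m → ℝ := ⇑(hB.eigenvectorBasis iB)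
  refine ⟨vecMulVec u v, ?_, ?_⟩
  · have hsq : fro (vecMulVec u v) ^ 2 = 1 := by
      rw [fro_vecMulVec_sq, hA.eigenvectorBasis_dotProduct_self,
        hB.eigenvectorBasis_dotProduct_self, one_mul]
    exact (pow_eq_one_iff_of_nonneg (Real.sqrt_nonneg _) two_ne_zero).mp hsq
  · rw [transpose_vecMulVec, fro_vecMulVec_mul_sq, fro_vecMulVec_mul_sq,
      hA.eigenvectorBasis_dotProduct_self, hB.eigenvectorBasis_dotProduct_self,
      hA.eigenvectorBasis_dotProduct_mulVec_self, hB.eigenvectorBasis_dotProduct_mulVec_self]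
    ring

end StackedOperator

/-- For `A ∈ ℝ^{n×h}`, `B ∈ ℝ^{m×h}` and the operator `T(U) = [U·B ; Uᵀ·A]`,
the extreme squared singular values of `T` (the extremal values of `‖T U‖_F²` over
unit-Frobenius-norm `U`) are `σ_min(A)² + σ_min(B)²` and `σ_max(A)² + σ_max(B)²`. -/
theorem stmt0 (n m h : ℕ) (hn : 0 < n) (hm : 0 < m)
    (A : Matrix (Fin n) (Fin h) ℝ) (B : Matrix (Fin m) (Fin h) ℝ) :
    sInf {r : ℝ | ∃ U : Matrix (Fin n) (Fin m) ℝ, fro U = 1 ∧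
        r = fro (U * B) ^ 2 + fro (Uᵀ * A) ^ 2}
      = sminSqR A + sminSqR B ∧
    sSup {r : ℝ | ∃ U : Matrix (Fin n) (Fin m) ℝ, fro U = 1 ∧
        r = fro (U * B) ^ 2 + fro (Uᵀ * A) ^ 2}
      = smaxSqR A + smaxSqR B := by
  have : Nonempty (Fin n) := ⟨⟨0, hn⟩⟩
  have : Nonempty (Fin m) := ⟨⟨0, hm⟩⟩
  obtain ⟨iA, hiA⟩ := exists_eq_ciInf_of_finite
    (f := (isHermitian_mul_conjTranspose_self A).eigenvalues)
  obtain ⟨iB, hiB⟩ := exists_eq_ciInf_of_finite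
    (f := (isHermitian_mul_conjTranspose_self B).eigenvalues)
  obtain ⟨jA, hjA⟩ := exists_eq_ciSup_of_finite
    (f := (isHermitian_mul_conjTranspose_self A).eigenvalues)
  obtain ⟨jB, hjB⟩ := exists_eq_ciSup_of_finite
    (f := (isHermitian_mul_conjTranspose_self B).eigenvalues)
  constructor
  · refine IsLeast.csInf_eq ⟨?_, ?_⟩
    · have hattain := exists_fro_eq_one_eq_eigenvalues_add A B iA iB
      rwa [hiA, hiB] at hattain
    · rintro r ⟨U, hU, rfl⟩
      exact sminSqR_add_sminSqR_le A B hU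
  · refine IsGreatest.csSup_eq ⟨?_, ?_⟩
    · have hattain := exists_fro_eq_one_eq_eigenvalues_add A B jA jB
      rwa [hjA, hjB] at hattain
    · rintro r ⟨U, hU, rfl⟩
      exact le_smaxSqR_add_smaxSqR A B hU
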